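/- If (m₀, m_{1/2}, …, m_{N/2}) belongs to the interior of the N-th fractional moment space on [0,1], then the entropy maximization problem with these fractional moment constraints admits a unique solution, of the form n^{ME}(S) = exp(−λ₀ − Σ_{i=1}^N λ_i S^{i/2}). -/

import Mathlib

open Real MeasureTheory

/-- Admissibility for the fractional-moment maximum entropy problem. -/
def MEAdmissible (N : ℕ) (m : Fin (N + 1) → ℝ) (n : ℝ → ℝ) : Prop :=
  (∀ S ∈ Set.Icc (0 : ℝ) 1, 0 ≤ n S) ∧
  IntegrableOn (fun S => n S * Real.log (n S)) (Set.Icc (0 : ℝ) 1) ∧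
  (∀ k : Fin (N + 1),
    IntegrableOn (fun S => S ^ (((k : ℕ) : ℝ) / 2) * n S) (Set.Icc (0 : ℝ) 1)) ∧
  (∀ k : Fin (N + 1), ∫ S in Set.Icc (0 : ℝ) 1, S ^ (((k : ℕ) : ℝ) / 2) * n S = m k)

/-- Shannon entropy of a size distribution on `[0,1]`. -/
noncomputable def shannonEntropy (n : ℝ → ℝ) : ℝ :=
  -∫ S in Set.Icc (0 : ℝ) 1, n S * Real.log (n S)

/-- The `N`-th fractional moment space on `[0,1]`. -/
def fracMomentSpace (N : ℕ) : Set (Fin (N + 1) → ℝ) :=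
  {v | ∃ μ : Measure ℝ, IsFiniteMeasure μ ∧ μ (Set.Icc (0 : ℝ) 1)ᶜ = 0 ∧
    ∀ k : Fin (N + 1), v k = ∫ x in Set.Icc (0 : ℝ) 1, x ^ (((k : ℕ) : ℝ) / 2) ∂μ}

/-
The maximum-entropy density is sought in Gibbs form `exp (-⟪λ, φ S⟫)` with features
`φ k S = S ^ (k / 2)`. Its multipliers minimise the convex dual potential
`G λ = ∫₀¹ exp (-⟪λ, φ S⟫) dS + ⟪λ, m⟫`, and at a minimiser the Gibbs density `g` has moments `m`.
`G` tends to `+∞` along every ray: in a direction `x` with `⟪x, φ⟫ ≥ 0` on `[0,1]` because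
interiority of `m` forces `⟪x, m⟫ > 0`, and otherwise because the integral grows exponentially.
For a continuous convex function this already yields a global minimiser. Finally, for every
admissible `n` with the same moments, the entropy gap `H g - H n` equals
`∫ g * klFun (n / g) ≥ 0` (Gibbs' inequality), which vanishes only if `n = g` almost everywhere:
this is both maximality and uniqueness.
-/

open Set Filter Topology InformationTheory

theorem ConvexOn.apply_zero_lt_apply_smul_of_le {E : Type*} [AddCommGroup E] [Module ℝ E]
    {f : E → ℝ} (hf : ConvexOn ℝ univ f) {x : E} {s t : ℝ} (hs : 0 < s) (hst : s ≤ t)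
    (hfs : f 0 < f (s • x)) : f 0 < f (t • x) := by
  obtain rfl | hst := hst.eq_or_lt
  · exact hfs
  have ht : 0 < t := hs.trans hst
  have hcomb : (1 - s / t) • (0 : E) + (s / t) • (t • x) = s • x := by
    rw [smul_zero, zero_add, smul_smul, div_mul_cancel₀ _ ht.ne']
  have := hf.lt_right_of_left_lt' (mem_univ 0) (mem_univ (t • x))
    (by rw [sub_pos, div_lt_one ht]; exact hst) (div_pos hs ht) (by ring) (hcomb ▸ hfs)
  exact hfs.trans (hcomb ▸ this)

theorem ConvexOn.exists_forall_le_of_tendsto_smul {E : Type*} [NormedAddCommGroup E]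
    [NormedSpace ℝ E] [FiniteDimensional ℝ E] {f : E → ℝ} (hf : ConvexOn ℝ univ f)
    (hcont : Continuous f) (hray : ∀ x ≠ 0, Tendsto (fun t : ℝ => f (t • x)) atTop atTop) :
    ∃ x₀, ∀ y, f x₀ ≤ f y := by
  -- By convexity `f 0 < f (s • y)` persists as `s` grows, so these open sets increase, and by
  -- compactness one of them contains the unit sphere.
  have hmono : Monotone fun n : ℕ => {y : E | f 0 < f ((n + 1 : ℝ) • y)} := fun p q hpq y hy =>
    hf.apply_zero_lt_apply_smul_of_le (by positivity) (by gcongr) hy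
  obtain ⟨n, hn⟩ := (isCompact_sphere (0 : E) 1).elim_directed_cover _
    (fun n => isOpen_lt continuous_const (hcont.comp (continuous_const_smul _)))
    (fun y hy => by
      obtain ⟨t, hft, ht⟩ := (((hray y (ne_zero_of_mem_unit_sphere ⟨y, hy⟩)).eventually_gt_atTop
        (f 0)).and (eventually_gt_atTop 0)).exists
      obtain ⟨n, hn⟩ := exists_nat_ge t
      exact mem_iUnion.2 ⟨n, hf.apply_zero_lt_apply_smul_of_le ht (by linarith) hft⟩)
    hmono.directed_le
  refine hcont.exists_forall_le' 0 ?_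
  filter_upwards [(isCompact_closedBall (0 : E) (n + 1)).compl_mem_cocompact] with y hy
  have hny : (n + 1 : ℝ) < ‖y‖ := by simpa using hy
  have hy0 : ‖y‖ ≠ 0 := by linarith
  have := hf.apply_zero_lt_apply_smul_of_le (by positivity) hny.le
    (hn (by simp [norm_smul, inv_mul_cancel₀ hy0] : ‖y‖⁻¹ • y ∈ Metric.sphere (0 : E) 1))
  rw [smul_smul, mul_inv_cancel₀ hy0, one_smul] at this
  exact this.le

theorem exists_subset_Icc_measureReal_pos_forall_lt {g : ℝ → ℝ} (hg : Continuous g) {S₀ a : ℝ}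
    (hS₀ : S₀ ∈ Icc (0 : ℝ) 1) (hgS₀ : g S₀ < a) :
    ∃ U ⊆ Icc (0 : ℝ) 1, MeasurableSet U ∧ 0 < volume.real U ∧ ∀ S ∈ U, g S < a := by
  have hU : IsOpen (Ioo 0 1 ∩ g ⁻¹' Iio a) := isOpen_Ioo.inter (isOpen_lt hg continuous_const)
  have hne : (Ioo (0 : ℝ) 1 ∩ g ⁻¹' Iio a).Nonempty := by
    rw [← closure_Ioo zero_ne_one] at hS₀
    simpa [inter_comm] using mem_closure_iff_nhds.1 hS₀ _ (hg.continuousAt (Iio_mem_nhds hgS₀))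
  refine ⟨_, inter_subset_left.trans Ioo_subset_Icc_self, hU.measurableSet, ?_,
    fun S hS => hS.2⟩
  exact ENNReal.toReal_pos (hU.measure_pos volume hne).ne'
    (measure_ne_top_of_subset inter_subset_left (by simp))

theorem tendsto_integral_exp_neg_mul_add_mul_atTop {g : ℝ → ℝ} (hg : Continuous g) {S₀ : ℝ}
    (hS₀ : S₀ ∈ Icc (0 : ℝ) 1) (hgS₀ : g S₀ < 0) (c : ℝ) :
    Tendsto (fun t => (∫ S in Icc (0 : ℝ) 1, exp (-(t * g S))) + t * c) atTop atTop := by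
  obtain ⟨a, ha, hgS₀⟩ : ∃ a > 0, g S₀ < -a := ⟨-g S₀ / 2, by linarith, by linarith⟩
  obtain ⟨U, hUsub, hUmeas, hUpos, hgU⟩ := exists_subset_Icc_measureReal_pos_forall_lt hg hS₀ hgS₀
  have hlower : ∀ t ≥ 0, volume.real U * (a * t) ^ 2 / 2 + t * c ≤
      (∫ S in Icc (0 : ℝ) 1, exp (-(t * g S))) + t * c := fun t ht => by
    have hint : IntegrableOn (fun S => exp (-(t * g S))) (Icc 0 1) :=
      (continuous_const.mul hg).neg.rexp.integrableOn_Icc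
    have hexp : (a * t) ^ 2 / 2 ≤ exp (a * t) := by
      simpa using pow_div_factorial_le_exp (a * t) (by positivity) 2
    have hU : exp (a * t) * volume.real U ≤ ∫ S in U, exp (-(t * g S)) :=
      setIntegral_ge_of_const_le_real hUmeas (measure_ne_top_of_subset hUsub (by simp))
        (fun S hS => exp_le_exp.2 (by nlinarith [hgU S hS])) (hint.mono_set hUsub)
    have hIcc := setIntegral_mono_set hint (Eventually.of_forall fun S => (exp_pos _).le)
      hUsub.eventuallyLE
    nlinarith
  refine tendsto_atTop_mono' _ (eventually_ge_atTop 0 |>.mono hlower) ?_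
  have : Tendsto (fun t : ℝ => t * (volume.real U * a ^ 2 / 2 * t + c)) atTop atTop :=
    tendsto_id.atTop_mul_atTop₀ (tendsto_atTop_add_const_right _ c
      (tendsto_id.const_mul_atTop (by positivity)))
  convert this using 2 with t
  ring

theorem hasDerivAt_setIntegral_exp_neg_add_mul {K : Set ℝ} (hK : IsCompact K) {f u : ℝ → ℝ}
    (hf : Continuous f) (hu : Continuous u) :
    HasDerivAt (fun τ => ∫ S in K, exp (-(f S + τ * u S)))
      (∫ S in K, -u S * exp (-f S)) 0 := by
  have hF (τ : ℝ) : Continuous fun S => exp (-(f S + τ * u S)) := by fun_prop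
  have hF' : Continuous fun p : ℝ × ℝ => -u p.2 * exp (-(f p.2 + p.1 * u p.2)) := by fun_prop
  obtain ⟨C, hC⟩ := ((isCompact_closedBall (0 : ℝ) 1).prod hK).exists_bound_of_continuousOn
    hF'.continuousOn
  have := hasDerivAt_integral_of_dominated_loc_of_deriv_le (μ := volume.restrict K)
    (F' := fun τ S => -u S * exp (-(f S + τ * u S))) (bound := fun _ => C)
    (Metric.ball_mem_nhds 0 one_pos)
    (Eventually.of_forall fun τ => (hF τ).aestronglyMeasurable)
    ((hF 0).continuousOn.integrableOn_compact hK)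
    (hF'.comp (Continuous.prodMk_right 0)).aestronglyMeasurable
    ((ae_restrict_mem hK.measurableSet).mono fun S hS τ hτ =>
      hC (τ, S) ⟨Metric.ball_subset_closedBall hτ, hS⟩)
    (integrableOn_const hK.measure_ne_top)
    (Eventually.of_forall fun S τ _ => by
      simpa [mul_comm] using (((hasDerivAt_id τ).mul_const (u S)).const_add (f S)).neg.exp)
  simpa using this.2

theorem mul_klFun_div {x y : ℝ} (hy : 0 < y) :
    y * klFun (x / y) = x * log x - x * log y + y - x := by
  rcases eq_or_ne x 0 with rfl | hx
  · simp [klFun]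
  · rw [klFun, log_div hx hy.ne']
    field_simp

section GibbsDensity

variable {ι : Type*} [Fintype ι]

noncomputable def gibbsDensity (φ : ι → ℝ → ℝ) (lam : ι → ℝ) (S : ℝ) : ℝ :=
  exp (-(lam ⬝ᵥ fun k => φ k S))

noncomputable def dualPotential (φ : ι → ℝ → ℝ) (m lam : ι → ℝ) : ℝ :=
  (∫ S in Icc (0 : ℝ) 1, gibbsDensity φ lam S) + lam ⬝ᵥ m

-- `MEAdmissible N m` unfolds to `MomentAdmissible (fracPow N) m`.
def MomentAdmissible (φ : ι → ℝ → ℝ) (m : ι → ℝ) (n : ℝ → ℝ) : Prop :=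
  (∀ S ∈ Icc (0 : ℝ) 1, 0 ≤ n S) ∧
  IntegrableOn (fun S => n S * log (n S)) (Icc (0 : ℝ) 1) ∧
  (∀ k, IntegrableOn (fun S => φ k S * n S) (Icc (0 : ℝ) 1)) ∧
  (∀ k, ∫ S in Icc (0 : ℝ) 1, φ k S * n S = m k)

variable {φ : ι → ℝ → ℝ}

theorem continuous_gibbsDensity_uncurry (hφ : ∀ k, Continuous (φ k)) :
    Continuous (Function.uncurry (gibbsDensity φ)) :=
  (continuous_fst.dotProduct (continuous_pi fun k => (hφ k).comp continuous_snd)).neg.rexp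

theorem continuous_gibbsDensity (hφ : ∀ k, Continuous (φ k)) (lam : ι → ℝ) :
    Continuous (gibbsDensity φ lam) :=
  (continuous_gibbsDensity_uncurry hφ).comp (Continuous.prodMk_right lam)

theorem integrableOn_gibbsDensity (hφ : ∀ k, Continuous (φ k))
    (lam : ι → ℝ) : IntegrableOn (gibbsDensity φ lam) (Icc 0 1) :=
  (continuous_gibbsDensity hφ lam).integrableOn_Icc

theorem continuous_dualPotential (hφ : ∀ k, Continuous (φ k)) (m : ι → ℝ) :
    Continuous (dualPotential φ m) :=
  (continuous_parametric_integral_of_continuous (continuous_gibbsDensity_uncurry hφ)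
    isCompact_Icc).add (continuous_id.dotProduct continuous_const)

theorem convexOn_dualPotential (hφ : ∀ k, Continuous (φ k)) (m : ι → ℝ) :
    ConvexOn ℝ univ (dualPotential φ m) := by
  refine ⟨convex_univ, fun lam _ mu _ a b ha hb hab => ?_⟩
  have hint := integrableOn_gibbsDensity hφ
  have hpt (S : ℝ) : gibbsDensity φ (a • lam + b • mu) S ≤
      a * gibbsDensity φ lam S + b * gibbsDensity φ mu S := by
    have := convexOn_exp.2 (mem_univ (-(lam ⬝ᵥ fun k => φ k S)))
      (mem_univ (-(mu ⬝ᵥ fun k => φ k S))) ha hb hab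
    simp only [smul_eq_mul] at this
    rwa [gibbsDensity, add_dotProduct, smul_dotProduct, smul_dotProduct, smul_eq_mul, smul_eq_mul,
      neg_add, ← mul_neg, ← mul_neg]
  calc dualPotential φ m (a • lam + b • mu)
      ≤ (∫ S in Icc (0 : ℝ) 1, (a * gibbsDensity φ lam S + b * gibbsDensity φ mu S))
        + (a • lam + b • mu) ⬝ᵥ m := by
        rw [dualPotential]
        gcongr ?_ + _
        exact setIntegral_mono (hint _) (((hint lam).const_mul a).add ((hint mu).const_mul b)) hpt
    _ = a • dualPotential φ m lam + b • dualPotential φ m mu := by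
        rw [integral_add ((hint lam).const_mul a) ((hint mu).const_mul b), integral_const_mul,
          integral_const_mul, add_dotProduct, smul_dotProduct, smul_dotProduct]
        simp only [dualPotential, smul_eq_mul]
        ring

theorem tendsto_dualPotential_smul_atTop (hφ : ∀ k, Continuous (φ k))
    {m : ι → ℝ} (hm : ∀ x ≠ 0, (∀ S ∈ Icc (0 : ℝ) 1, 0 ≤ x ⬝ᵥ fun k => φ k S) → 0 < x ⬝ᵥ m)
    {x : ι → ℝ} (hx : x ≠ 0) :
    Tendsto (fun t : ℝ => dualPotential φ m (t • x)) atTop atTop := by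
  have hray (t : ℝ) : dualPotential φ m (t • x) =
      (∫ S in Icc (0 : ℝ) 1, exp (-(t * x ⬝ᵥ fun k => φ k S))) + t * (x ⬝ᵥ m) := by
    simp [dualPotential, gibbsDensity, smul_dotProduct]
  simp_rw [hray]
  by_cases hxS : ∀ S ∈ Icc (0 : ℝ) 1, 0 ≤ x ⬝ᵥ fun k => φ k S
  · exact (tendsto_id.atTop_mul_const (hm x hx hxS)).nonneg_add_atTop
      fun t => setIntegral_nonneg measurableSet_Icc fun S _ => (exp_pos _).le
  · push Not at hxS
    obtain ⟨S₀, hS₀, hneg⟩ := hxS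
    exact tendsto_integral_exp_neg_mul_add_mul_atTop
      (continuous_const.dotProduct (continuous_pi hφ)) hS₀ hneg _

theorem setIntegral_mul_gibbsDensity_eq_of_forall_le (hφ : ∀ k, Continuous (φ k))
    {m lam : ι → ℝ} (hmin : ∀ v, dualPotential φ m lam ≤ dualPotential φ m v) (k : ι) :
    ∫ S in Icc (0 : ℝ) 1, φ k S * gibbsDensity φ lam S = m k := by
  classical
  set line := fun τ : ℝ => dualPotential φ m (lam + τ • Pi.single k 1)
  have hline : line = fun τ => (∫ S in Icc (0 : ℝ) 1, exp (-((lam ⬝ᵥ fun i => φ i S) + τ * φ k S)))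
      + (lam ⬝ᵥ m + τ * m k) := by
    funext τ
    simp [line, dualPotential, gibbsDensity, add_dotProduct, smul_dotProduct, single_dotProduct]
  have hderiv :
      HasDerivAt line ((∫ S in Icc (0 : ℝ) 1, -φ k S * gibbsDensity φ lam S) + m k) 0 := by
    rw [hline]
    refine ((hasDerivAt_setIntegral_exp_neg_add_mul isCompact_Icc
      (continuous_const.dotProduct (continuous_pi hφ)) (hφ k)).add
      (((hasDerivAt_id (0 : ℝ)).mul_const (m k)).const_add (lam ⬝ᵥ m))).congr_deriv ?_
    simp [gibbsDensity]
  have hzero := IsLocalMin.hasDerivAt_eq_zero (Eventually.of_forall fun τ => by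
    simpa [line] using hmin _) hderiv
  simp only [neg_mul, integral_neg] at hzero
  linarith

theorem mul_log_gibbsDensity (lam : ι → ℝ) (n : ℝ → ℝ) (S : ℝ) :
    n S * log (gibbsDensity φ lam S) = -∑ k, lam k * (φ k S * n S) := by
  rw [gibbsDensity, log_exp, mul_neg, dotProduct, Finset.mul_sum]
  exact congrArg _ (Finset.sum_congr rfl fun k _ => by ring)

theorem integrableOn_mul_log_gibbsDensity {n : ℝ → ℝ}
    (hn : ∀ k, IntegrableOn (fun S => φ k S * n S) (Icc (0 : ℝ) 1)) (lam : ι → ℝ) :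
    IntegrableOn (fun S => n S * log (gibbsDensity φ lam S)) (Icc (0 : ℝ) 1) := by
  simp_rw [mul_log_gibbsDensity]
  exact (integrable_finsetSum _ fun k _ => (hn k).const_mul (lam k)).neg

theorem setIntegral_mul_log_gibbsDensity {m : ι → ℝ} {n : ℝ → ℝ}
    (hn : ∀ k, IntegrableOn (fun S => φ k S * n S) (Icc (0 : ℝ) 1))
    (hnm : ∀ k, ∫ S in Icc (0 : ℝ) 1, φ k S * n S = m k) (lam : ι → ℝ) :
    ∫ S in Icc (0 : ℝ) 1, n S * log (gibbsDensity φ lam S) = -(lam ⬝ᵥ m) := by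
  simp_rw [mul_log_gibbsDensity]
  rw [integral_neg, integral_finsetSum _ fun k _ => (hn k).const_mul (lam k)]
  simp [integral_const_mul, hnm, dotProduct]

theorem integrableOn_mul_gibbsDensity (hφ : ∀ k, Continuous (φ k))
    (lam : ι → ℝ) (k : ι) :
    IntegrableOn (fun S => φ k S * gibbsDensity φ lam S) (Icc (0 : ℝ) 1) :=
  ((hφ k).mul (continuous_gibbsDensity hφ lam)).integrableOn_Icc

theorem momentAdmissible_gibbsDensity (hφ : ∀ k, Continuous (φ k))
    {m lam : ι → ℝ} (hg : ∀ k, ∫ S in Icc (0 : ℝ) 1, φ k S * gibbsDensity φ lam S = m k) :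
    MomentAdmissible φ m (gibbsDensity φ lam) :=
  ⟨fun _ _ => (exp_pos _).le, ((continuous_gibbsDensity hφ lam).mul
    ((continuous_gibbsDensity hφ lam).log fun _ => (exp_pos _).ne')).integrableOn_Icc,
    integrableOn_mul_gibbsDensity hφ lam, hg⟩

theorem shannonEntropy_gibbsDensity (hφ : ∀ k, Continuous (φ k))
    {m lam : ι → ℝ} (hg : ∀ k, ∫ S in Icc (0 : ℝ) 1, φ k S * gibbsDensity φ lam S = m k) :
    shannonEntropy (gibbsDensity φ lam) = lam ⬝ᵥ m := by
  rw [shannonEntropy, setIntegral_mul_log_gibbsDensity (integrableOn_mul_gibbsDensity hφ lam) hg,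
    neg_neg]

theorem setIntegral_mul_klFun_div_gibbsDensity (hφ : ∀ k, Continuous (φ k))
    {k₀ : ι} (hk₀ : ∀ S ∈ Icc (0 : ℝ) 1, φ k₀ S = 1) {m lam : ι → ℝ}
    (hg : ∀ k, ∫ S in Icc (0 : ℝ) 1, φ k S * gibbsDensity φ lam S = m k) {n : ℝ → ℝ}
    (hn : MomentAdmissible φ m n) :
    IntegrableOn (fun S => gibbsDensity φ lam S * klFun (n S / gibbsDensity φ lam S))
        (Icc (0 : ℝ) 1) ∧
      ∫ S in Icc (0 : ℝ) 1, gibbsDensity φ lam S * klFun (n S / gibbsDensity φ lam S) =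
        lam ⬝ᵥ m - shannonEntropy n := by
  obtain ⟨-, hnlog, hnφ, hnm⟩ := hn
  have hmass {f : ℝ → ℝ} (hf : ∀ k, ∫ S in Icc (0 : ℝ) 1, φ k S * f S = m k) :
      ∫ S in Icc (0 : ℝ) 1, f S = m k₀ := by
    rw [← hf k₀]
    exact setIntegral_congr_fun measurableSet_Icc fun S hS => by simp [hk₀ S hS]
  have hnint : IntegrableOn n (Icc (0 : ℝ) 1) :=
    (hnφ k₀).congr_fun (fun S hS => by simp [hk₀ S hS]) measurableSet_Icc
  have h1 : IntegrableOn (fun S => n S * log (n S) - n S * log (gibbsDensity φ lam S))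
      (Icc (0 : ℝ) 1) := hnlog.sub (integrableOn_mul_log_gibbsDensity hnφ lam)
  have h2 : IntegrableOn (fun S => n S * log (n S) - n S * log (gibbsDensity φ lam S) +
      gibbsDensity φ lam S) (Icc (0 : ℝ) 1) := h1.add (integrableOn_gibbsDensity hφ lam)
  have hpt : (fun S => gibbsDensity φ lam S * klFun (n S / gibbsDensity φ lam S)) =
      fun S => n S * log (n S) - n S * log (gibbsDensity φ lam S) + gibbsDensity φ lam S - n S :=
    funext fun S => mul_klFun_div (exp_pos _)
  rw [hpt]
  refine ⟨h2.sub hnint, ?_⟩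
  rw [integral_sub h2 hnint, integral_add h1 (integrableOn_gibbsDensity hφ lam),
    integral_sub hnlog (integrableOn_mul_log_gibbsDensity hnφ lam),
    setIntegral_mul_log_gibbsDensity hnφ hnm, hmass hg, hmass hnm, shannonEntropy]
  ring

theorem shannonEntropy_le_shannonEntropy_gibbsDensity
    (hφ : ∀ k, Continuous (φ k)) {k₀ : ι} (hk₀ : ∀ S ∈ Icc (0 : ℝ) 1, φ k₀ S = 1)
    {m lam : ι → ℝ} (hg : ∀ k, ∫ S in Icc (0 : ℝ) 1, φ k S * gibbsDensity φ lam S = m k)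
    {n : ℝ → ℝ} (hn : MomentAdmissible φ m n) :
    shannonEntropy n ≤ shannonEntropy (gibbsDensity φ lam) := by
  have hkl : 0 ≤ ∫ S in Icc (0 : ℝ) 1, gibbsDensity φ lam S * klFun (n S / gibbsDensity φ lam S) :=
    setIntegral_nonneg measurableSet_Icc fun S hS =>
      mul_nonneg (exp_pos _).le (klFun_nonneg (div_nonneg (hn.1 S hS) (exp_pos _).le))
  rw [(setIntegral_mul_klFun_div_gibbsDensity hφ hk₀ hg hn).2] at hkl
  rw [shannonEntropy_gibbsDensity hφ hg]
  linarith

theorem ae_eq_gibbsDensity_of_shannonEntropy_eq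
    (hφ : ∀ k, Continuous (φ k)) {k₀ : ι} (hk₀ : ∀ S ∈ Icc (0 : ℝ) 1, φ k₀ S = 1)
    {m lam : ι → ℝ} (hg : ∀ k, ∫ S in Icc (0 : ℝ) 1, φ k S * gibbsDensity φ lam S = m k)
    {n : ℝ → ℝ} (hn : MomentAdmissible φ m n)
    (hent : shannonEntropy n = shannonEntropy (gibbsDensity φ lam)) :
    n =ᵐ[volume.restrict (Icc (0 : ℝ) 1)] gibbsDensity φ lam := by
  obtain ⟨hint, hval⟩ := setIntegral_mul_klFun_div_gibbsDensity hφ hk₀ hg hn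
  rw [hent, shannonEntropy_gibbsDensity hφ hg, sub_self] at hval
  have hzero := (integral_eq_zero_iff_of_nonneg_ae (ae_restrict_of_forall_mem measurableSet_Icc
    fun S hS => mul_nonneg (exp_pos _).le (klFun_nonneg (div_nonneg (hn.1 S hS) (exp_pos _).le)))
    hint).1 hval
  filter_upwards [hzero, ae_restrict_mem measurableSet_Icc] with S hS hmem
  have := (klFun_eq_zero_iff (div_nonneg (hn.1 S hmem) (exp_pos _).le)).1
    ((mul_eq_zero.1 hS).resolve_left (exp_pos _).ne')
  exact (div_eq_one_iff_eq (exp_pos _).ne').1 this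

end GibbsDensity

noncomputable def fracPow (N : ℕ) (k : Fin (N + 1)) (S : ℝ) : ℝ := S ^ (((k : ℕ) : ℝ) / 2)

theorem dotProduct_fracPow (N : ℕ) (lam : Fin (N + 1) → ℝ) (S : ℝ) :
    (lam ⬝ᵥ fun k => fracPow N k S) =
      lam 0 + ∑ i ∈ Finset.Icc 1 N, lam (Fin.ofNat (N + 1) i) * S ^ ((i : ℝ) / 2) := by
  have hrange : (lam ⬝ᵥ fun k => fracPow N k S) =
      ∑ i ∈ Finset.range (N + 1), lam (Fin.ofNat (N + 1) i) * S ^ ((i : ℝ) / 2) := by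
    rw [← Fin.sum_univ_eq_sum_range (fun i => lam (Fin.ofNat (N + 1) i) * S ^ ((i : ℝ) / 2))]
    simp [dotProduct, fracPow]
  rw [hrange, Finset.range_eq_Ico, Finset.sum_eq_sum_Ico_succ_bot N.succ_pos, zero_add,
    Nat.succ_eq_add_one, Finset.Ico_add_one_right_eq_Icc]
  simp

theorem continuous_fracPow (N : ℕ) (k : Fin (N + 1)) : Continuous (fracPow N k) :=
  continuous_id.rpow_const fun _ => Or.inr (by positivity)

theorem fracPow_zero (N : ℕ) (S : ℝ) : fracPow N 0 S = 1 := by simp [fracPow]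

theorem dotProduct_nonneg_of_mem_fracMomentSpace {N : ℕ} {u v : Fin (N + 1) → ℝ}
    (hv : v ∈ fracMomentSpace N) (hu : ∀ S ∈ Icc (0 : ℝ) 1, 0 ≤ u ⬝ᵥ fun k => fracPow N k S) :
    0 ≤ u ⬝ᵥ v := by
  obtain ⟨μ, hμ, -, hmom⟩ := hv
  have hint (k : Fin (N + 1)) : IntegrableOn (fun S => u k * fracPow N k S) (Icc 0 1) μ :=
    (continuous_const.mul (continuous_fracPow N k)).integrableOn_Icc
  have hdot : u ⬝ᵥ v = ∫ S in Icc (0 : ℝ) 1, (u ⬝ᵥ fun k => fracPow N k S) ∂μ := by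
    simp only [dotProduct]
    rw [integral_finsetSum _ fun k _ => hint k]
    simp [hmom, integral_const_mul, fracPow]
  exact hdot ▸ setIntegral_nonneg measurableSet_Icc hu

theorem dotProduct_pos_of_mem_interior_fracMomentSpace {N : ℕ} {m x : Fin (N + 1) → ℝ}
    (hm : m ∈ interior (fracMomentSpace N)) (hx : x ≠ 0)
    (hxS : ∀ S ∈ Icc (0 : ℝ) 1, 0 ≤ x ⬝ᵥ fun k => fracPow N k S) : 0 < x ⬝ᵥ m := by
  have hlim : Tendsto (fun t : ℝ => m - t • x) (𝓝[>] 0) (𝓝 m) := by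
    simpa using ((tendsto_const_nhds (x := m)).sub (tendsto_id.smul_const x)).mono_left
      (nhdsWithin_le_nhds (a := (0 : ℝ)))
  obtain ⟨t, hmt, ht⟩ :=
    ((hlim.eventually (isOpen_interior.mem_nhds hm)).and self_mem_nhdsWithin).exists
  have := dotProduct_nonneg_of_mem_fracMomentSpace (interior_subset hmt) hxS
  rw [dotProduct_sub, dotProduct_smul, smul_eq_mul] at this
  have hxx : 0 < x ⬝ᵥ x := by simpa using Matrix.dotProduct_self_star_pos_iff.2 hx
  nlinarith [mul_pos (show (0 : ℝ) < t from ht) hxx]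

/-- If the fractional moment vector lies in the interior of the moment space, the entropy
maximization problem admits a solution, unique a.e., of exponential form. -/
theorem maxEntropy_exists_unique_of_interior (N : ℕ) (m : Fin (N + 1) → ℝ)
    (hm : m ∈ interior (fracMomentSpace N)) :
    ∃ nME : ℝ → ℝ,
      MEAdmissible N m nME ∧
      (∀ n, MEAdmissible N m n → shannonEntropy n ≤ shannonEntropy nME) ∧
      (∃ lam : Fin (N + 1) → ℝ, ∀ S ∈ Set.Icc (0 : ℝ) 1,
        nME S = Real.exp (-(lam 0) -
          ∑ i ∈ Finset.Icc 1 N, lam (Fin.ofNat (N + 1) i) * S ^ ((i : ℝ) / 2))) ∧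
      (∀ n', MEAdmissible N m n' →
        (∀ n, MEAdmissible N m n → shannonEntropy n ≤ shannonEntropy n') →
        ∀ᵐ S ∂(volume.restrict (Set.Icc (0 : ℝ) 1)), n' S = nME S) := by
  have hφ := continuous_fracPow N
  have hk₀ : ∀ S ∈ Icc (0 : ℝ) 1, fracPow N 0 S = 1 := fun S _ => fracPow_zero N S
  obtain ⟨lam, hmin⟩ := (convexOn_dualPotential hφ m).exists_forall_le_of_tendsto_smul
    (continuous_dualPotential hφ m) fun x hx => tendsto_dualPotential_smul_atTop hφ
      (fun _ => dotProduct_pos_of_mem_interior_fracMomentSpace hm) hx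
  have hg := setIntegral_mul_gibbsDensity_eq_of_forall_le hφ hmin
  have hmax (n : ℝ → ℝ) (hn : MEAdmissible N m n) :
      shannonEntropy n ≤ shannonEntropy (gibbsDensity (fracPow N) lam) :=
    shannonEntropy_le_shannonEntropy_gibbsDensity hφ hk₀ hg hn
  refine ⟨gibbsDensity (fracPow N) lam, momentAdmissible_gibbsDensity hφ hg, hmax,
    ⟨lam, fun S _ => by rw [gibbsDensity, dotProduct_fracPow, neg_add, sub_eq_add_neg]⟩,
    fun n hn hn_max => ?_⟩
  exact ae_eq_gibbsDensity_of_shannonEntropy_eq hφ hk₀ hg hn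
    ((hmax n hn).antisymm (hn_max _ (momentAdmissible_gibbsDensity hφ hg)))
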